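/- arXiv:2510.01947 — 6 statements merged into one kernel-verified Lean document; each statement's English description precedes it below -/
import Mathlib

section
/- If f ∈ A(𝒢) satisfies |f((0,y))| ≥ 1/2 for every y ∈ Y, then the support {γ ∈ 𝒢 : f(γ) ≠ 0} of f contains a nonempty open subset of 𝒢; in particular, f is not singular. -/
/-!
The summands `f_g` of `f` with `g ∈ {0} × H` glue, via the sections `σ_g`, to a continuous
function `s` on `𝒢⁰` that agrees with `f` on `{0} × Y` and whose value at `z_i` is a sum of
values `f(g, z_i)`. Both `Y` and `Z` converge to `ε`, so `|s(ε)| ≥ 1/2` and `s(z_i) ≠ 0` for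
some `i`; hence `f(g, z_i) ≠ 0` for some `g`, and the singleton `{(g, z_i)}` is open in `𝒢`.
-/

/-- The unit space `𝒢⁰ = X ⊔ Y ⊔ Z ⊔ {ε}`. -/
inductive U0 : Type
  | x : ℕ → ℕ → U0
  | y : ℕ → U0
  | z : ℕ → U0
  | eps : U0

/-- Basic neighbourhoods `U_{y_i,F} = {y_i} ∪ (X_i \ F)` of `y_i`, where the finite set
`F ⊆ X_i` is recorded by the finite set of second indices `j`. -/
def Uy (i : ℕ) (F : Finset ℕ) : Set U0 :=
  {u | u = U0.y i ∨ ∃ j ∉ F, u = U0.x i j}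

/-- Basic neighbourhoods `U_{F_Y,F_Z} = 𝒢⁰ \ (⋃_{y_i ∈ F_Y} U_{y_i,∅} ∪ F_Z)` of `ε`,
where the finite sets `F_Y ⊆ Y`, `F_Z ⊆ Z` are recorded by finite sets of indices. -/
def UFF (FY FZ : Finset ℕ) : Set U0 :=
  ((⋃ i ∈ FY, Uy i ∅) ∪ (U0.z '' (FZ : Set ℕ)))ᶜ

/-- The topology on the unit space, generated by the basis described above. -/
instance : TopologicalSpace U0 :=
  TopologicalSpace.generateFrom
    ({s | ∃ i j, s = {U0.x i j}} ∪ {s | ∃ i, s = {U0.z i}} ∪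
      {s | ∃ i F, s = Uy i F} ∪ {s | ∃ FY FZ, s = UFF FY FZ})

/-- The groupoid `𝒢 = X ⊔ ((ℤ/2) × Y) ⊔ (G × Z) ⊔ (G × {ε})`, as a set,
where `G = (ℤ/2) × H`. -/
inductive Grpd (H : Type) : Type
  | x : ℕ → ℕ → Grpd H
  | y : ZMod 2 → ℕ → Grpd H
  | z : ZMod 2 × H → ℕ → Grpd H
  | eps : ZMod 2 × H → Grpd H

/-- The section `σ_g : 𝒢⁰ → 𝒢` associated to `g = (n,h) ∈ G`. -/
def sigmaMap {H : Type} (g : ZMod 2 × H) : U0 → Grpd H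
  | U0.x i j => Grpd.x i j
  | U0.y i => Grpd.y g.1 i
  | U0.z i => Grpd.z g i
  | U0.eps => Grpd.eps g

/-- The bisection `U_g = σ_g(𝒢⁰)`. -/
def Ug {H : Type} (g : ZMod 2 × H) : Set (Grpd H) :=
  Set.range (sigmaMap g)

/-- The topology on `𝒢`, generated by the sets `σ_g(U)` for `U ⊆ 𝒢⁰` open. -/
instance (H : Type) : TopologicalSpace (Grpd H) :=
  TopologicalSpace.generateFrom {s | ∃ (g : ZMod 2 × H) (U : Set U0), IsOpen U ∧ s = sigmaMap g '' U}

/-- The algebra `A(𝒢)`: functions of the form `f = ∑_{g ∈ T} f_g`, `T ⊆ G` finite, where each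
`f_g` vanishes outside `U_g` and `f_g ∘ σ_g` is continuous. -/
def AG (H : Type) : Set (Grpd H → ℂ) :=
  {f | ∃ (T : Finset (ZMod 2 × H)) (F : (ZMod 2 × H) → Grpd H → ℂ),
    (∀ g : ZMod 2 × H, ∀ γ ∉ Ug g, F g γ = 0) ∧
    (∀ g : ZMod 2 × H, Continuous (F g ∘ sigmaMap g)) ∧
    f = fun γ => ∑ g ∈ T, F g γ}

/-- A function on `𝒢` is singular if its support has empty interior. -/
def Singular {H : Type} (f : Grpd H → ℂ) : Prop :=
  interior {γ : Grpd H | f γ ≠ 0} = ∅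

open Filter Topology TopologicalSpace

section UnitSpace

/-- The point `ε` lies in no basic open set other than the `U_{F_Y,F_Z}`. -/
theorem tendsto_nhds_eps {u : ℕ → U0}
    (hu : ∀ FY FZ, ∀ᶠ k in atTop, u k ∈ UFF FY FZ) : Tendsto u atTop (𝓝 U0.eps) := by
  rw [tendsto_nhds_generateFrom_iff]
  rintro s (((⟨i, j, rfl⟩ | ⟨i, rfl⟩) | ⟨i, F, rfl⟩) | ⟨FY, FZ, rfl⟩) hs
  · simp at hs
  · simp at hs
  · simp [Uy] at hs
  · exact hu FY FZ

theorem tendsto_y_nhds_eps : Tendsto U0.y atTop (𝓝 U0.eps) := by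
  refine tendsto_nhds_eps fun FY FZ => ?_
  filter_upwards [eventually_gt_atTop (FY.sup id)] with k hk
  simp only [UFF, Set.mem_compl_iff, Set.mem_union, Set.mem_iUnion, Uy, Set.mem_ofPred_eq,
    Set.mem_image, not_or, not_exists]
  refine ⟨fun i hi => ⟨fun h => ?_, fun j ⟨_, h⟩ => U0.noConfusion h⟩,
    fun m ⟨_, h⟩ => U0.noConfusion h⟩
  cases h
  exact hk.not_ge (Finset.le_sup (f := id) hi)

theorem tendsto_z_nhds_eps : Tendsto U0.z atTop (𝓝 U0.eps) := by
  refine tendsto_nhds_eps fun FY FZ => ?_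
  filter_upwards [eventually_gt_atTop (FZ.sup id)] with k hk
  simp only [UFF, Set.mem_compl_iff, Set.mem_union, Set.mem_iUnion, Uy, Set.mem_ofPred_eq,
    Set.mem_image, not_or, not_exists]
  refine ⟨fun i _ => ⟨fun h => U0.noConfusion h, fun j ⟨_, h⟩ => U0.noConfusion h⟩,
    fun m ⟨hm, h⟩ => ?_⟩
  cases h
  exact hk.not_ge (Finset.le_sup (f := id) (Finset.mem_coe.mp hm))

theorem eventually_z_ne_zero {E : Type*} [NormedAddGroup E] {s : U0 → E}
    (hs : Continuous s) {r : ℝ} (hr : 0 < r) (hy : ∀ i, r ≤ ‖s (U0.y i)‖) :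
    ∀ᶠ i in atTop, s (U0.z i) ≠ 0 := by
  have hlim : Tendsto (fun i => ‖s (U0.y i)‖) atTop (𝓝 ‖s U0.eps‖) :=
    (continuous_norm.comp hs).continuousAt.tendsto.comp tendsto_y_nhds_eps
  have heps : s U0.eps ≠ 0 := by
    intro h
    have := ge_of_tendsto' hlim hy
    rw [h, norm_zero] at this
    linarith
  exact (hs.continuousAt.tendsto.comp tendsto_z_nhds_eps) (isOpen_ne.mem_nhds heps)

end UnitSpace

section Groupoid

variable {H : Type}

theorem y_mem_Ug_iff {g : ZMod 2 × H} {n : ZMod 2} {i : ℕ} : Grpd.y n i ∈ Ug g ↔ g.1 = n := by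
  constructor
  · rintro ⟨u, hu⟩
    cases u <;> simp_all [sigmaMap]
  · rintro rfl
    exact ⟨U0.y i, rfl⟩

theorem z_mem_Ug_iff {g g' : ZMod 2 × H} {i : ℕ} : Grpd.z g' i ∈ Ug g ↔ g = g' := by
  constructor
  · rintro ⟨u, hu⟩
    cases u <;> simp_all [sigmaMap]
  · rintro rfl
    exact ⟨U0.z i, rfl⟩

theorem isOpen_singleton_z (g : ZMod 2 × H) (i : ℕ) : IsOpen ({Grpd.z g i} : Set (Grpd H)) := by
  refine isOpen_generateFrom_of_mem ⟨g, {U0.z i}, ?_, by simp [sigmaMap]⟩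
  exact isOpen_generateFrom_of_mem (Or.inl (Or.inl (Or.inr ⟨i, rfl⟩)))

theorem exists_continuous_of_mem_AG {f : Grpd H → ℂ} (hf : f ∈ AG H) :
    ∃ (T₀ : Finset (ZMod 2 × H)) (s : U0 → ℂ), Continuous s ∧
      (∀ i, s (U0.y i) = f (Grpd.y 0 i)) ∧ ∀ i, s (U0.z i) = ∑ g ∈ T₀, f (Grpd.z g i) := by
  classical
  obtain ⟨T, F, hvan, hcont, rfl⟩ := hf
  refine ⟨T.filter (·.1 = 0), fun u => ∑ g ∈ T.filter (·.1 = 0), F g (sigmaMap g u),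
    continuous_finsetSum _ fun g _ => hcont g, fun i => ?_, fun i => ?_⟩
  · dsimp only
    rw [Finset.sum_filter]
    refine Finset.sum_congr rfl fun g _ => ?_
    split_ifs with h
    · simp [sigmaMap, h]
    · exact (hvan g _ (mt y_mem_Ug_iff.mp h)).symm
  · refine Finset.sum_congr rfl fun g hg => ?_
    refine (Finset.sum_eq_single_of_mem (f := fun g' => F g' (Grpd.z g i)) g
      (Finset.mem_filter.mp hg).1 fun g' _ hne => ?_).symm
    exact hvan g' _ (mt z_mem_Ug_iff.mp hne)

theorem exists_z_ne_zero_of_mem_AG {f : Grpd H → ℂ} (hf : f ∈ AG H) {r : ℝ} (hr : 0 < r)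
    (hy : ∀ i, r ≤ ‖f (Grpd.y 0 i)‖) : ∃ g i, f (Grpd.z g i) ≠ 0 := by
  obtain ⟨T₀, s, hs, hsy, hsz⟩ := exists_continuous_of_mem_AG hf
  obtain ⟨i, hi⟩ := (eventually_z_ne_zero hs hr fun i => hsy i ▸ hy i).exists
  rw [hsz] at hi
  obtain ⟨g, -, hg⟩ := Finset.exists_ne_zero_of_sum_ne_zero hi
  exact ⟨g, i, hg⟩

theorem not_singular_of_isOpen_subset {f : Grpd H → ℂ} {V : Set (Grpd H)} (hV : IsOpen V)
    (hne : V.Nonempty) (hVf : V ⊆ {γ | f γ ≠ 0}) : ¬ Singular f := fun hsing =>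
  Set.not_nonempty_empty (hsing ▸ hne.mono (hV.subset_interior_iff.mpr hVf))

end Groupoid

theorem stmt1_general (H : Type) (f : Grpd H → ℂ) (hf : f ∈ AG H)
    (hy : ∀ i : ℕ, (1 : ℝ) / 2 ≤ ‖f (Grpd.y 0 i)‖) :
    (∃ V : Set (Grpd H), IsOpen V ∧ V.Nonempty ∧ V ⊆ {γ : Grpd H | f γ ≠ 0}) ∧
    ¬ Singular f := by
  obtain ⟨g, i, hgi⟩ := exists_z_ne_zero_of_mem_AG hf one_half_pos hy
  have hsub : ({Grpd.z g i} : Set (Grpd H)) ⊆ {γ | f γ ≠ 0} := Set.singleton_subset_iff.mpr hgi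
  exact ⟨⟨_, isOpen_singleton_z g i, Set.singleton_nonempty _, hsub⟩,
    not_singular_of_isOpen_subset (isOpen_singleton_z g i) (Set.singleton_nonempty _) hsub⟩

/-- If `f ∈ A(𝒢)` satisfies `|f((0,y))| ≥ 1/2` for every `y ∈ Y`, then the support of `f`
contains a nonempty open set; in particular `f` is not singular. -/
theorem stmt1 (H : Type) [Group H] (f : Grpd H → ℂ) (hf : f ∈ AG H)
    (hy : ∀ i : ℕ, (1 : ℝ) / 2 ≤ ‖f (Grpd.y 0 i)‖) :
    (∃ V : Set (Grpd H), IsOpen V ∧ V.Nonempty ∧ V ⊆ {γ : Grpd H | f γ ≠ 0}) ∧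
    ¬ Singular f :=
  stmt1_general H f hf hy
end

section
/- Define g₀ : 𝒢 → ℂ by g₀((0,y)) = 1 and g₀((1,y)) = −1 for all y ∈ Y, and g₀ = 0 on X ⊔ (G × Z) ⊔ (G × {ε}). Then: (i) g₀ is singular, i.e. its support (ℤ/2ℤ) × Y has empty interior in 𝒢; (ii) every f ∈ A(𝒢) with sup_{γ∈𝒢} |f(γ) − g₀(γ)| < 1/2 has support with nonempty interior, hence is not singular. Consequently, g₀ does not lie in the closure, with respect to the supremum norm on functions 𝒢 → ℂ, of the set of singular elements of A(𝒢). -/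
/-- The function `g₀` taking value `1` at `(0,y)`, `-1` at `(1,y)` (`y ∈ Y`), and `0`
elsewhere. -/
noncomputable def g0 (H : Type) : Grpd H → ℂ
  | Grpd.y n _ => if n = 0 then 1 else -1
  | _ => 0

/-!
The points `y_i` and `z_i` both converge to `ε`, and `x_{ij} → y_i` as `j → ∞`. If `f ∈ A(𝒢)`
vanished on `G × Z`, the components `f_g` with `g.1 = 1` would sum to a continuous function on
`𝒢⁰` vanishing at every `z_i`, hence at `ε`, and equal to `f(1, y_i)` at `y_i`; so
`f(1, y_i) → 0`, which is incompatible with `‖f - g₀‖ < 1`. Thus `f` is nonzero at some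
`(g, z_i)`, an isolated point of `𝒢`. On the other hand every neighbourhood of `(n, y_i)` meets
`X`, so the support `(ℤ/2) × Y` of `g₀` has empty interior.
-/

open Filter Topology TopologicalSpace

namespace U0

lemma tendsto_y_nhds_eps : Tendsto U0.y cofinite (𝓝 U0.eps) := by
  refine tendsto_nhds_generateFrom_iff.2 ?_
  rintro s (((⟨i, j, rfl⟩ | ⟨i, rfl⟩) | ⟨i, F, rfl⟩) | ⟨FY, FZ, rfl⟩) hs
  · simp at hs
  · simp at hs
  · simp [Uy] at hs
  · refine FY.finite_toSet.subset fun i hi => ?_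
    simpa [UFF, Uy] using hi

lemma tendsto_z_nhds_eps : Tendsto U0.z cofinite (𝓝 U0.eps) := by
  refine tendsto_nhds_generateFrom_iff.2 ?_
  rintro s (((⟨i, j, rfl⟩ | ⟨i, rfl⟩) | ⟨i, F, rfl⟩) | ⟨FY, FZ, rfl⟩) hs
  · simp at hs
  · simp at hs
  · simp [Uy] at hs
  · refine FZ.finite_toSet.subset fun i hi => ?_
    simpa [UFF, Uy] using hi

lemma tendsto_x_nhds_y (i : ℕ) : Tendsto (U0.x i) cofinite (𝓝 (U0.y i)) := by
  refine tendsto_nhds_generateFrom_iff.2 ?_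
  rintro s (((⟨i', j, rfl⟩ | ⟨i', rfl⟩) | ⟨i', F, rfl⟩) | ⟨FY, FZ, rfl⟩) hs
  · simp at hs
  · simp at hs
  · obtain rfl : i = i' := by simpa [Uy] using hs
    refine F.finite_toSet.subset fun j hj => ?_
    simpa [Uy] using hj
  · have hi : i ∉ FY := by simpa [UFF, Uy] using hs
    exact Eventually.of_forall fun j => by simpa [UFF, Uy] using hi

end U0

namespace Grpd

variable {H : Type}

lemma tendsto_x_nhds_y (n : ZMod 2) (i : ℕ) :
    Tendsto (Grpd.x i : ℕ → Grpd H) cofinite (𝓝 (Grpd.y n i)) := by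
  refine tendsto_nhds_generateFrom_iff.2 ?_
  rintro _ ⟨g, U, hU, rfl⟩ ⟨u, hu, hgu⟩
  cases u with
  | y k =>
    obtain ⟨-, rfl⟩ := Grpd.y.inj hgu
    filter_upwards [U0.tendsto_x_nhds_y k (hU.mem_nhds hu)] with j hj
    exact ⟨U0.x k j, hj, rfl⟩
  | _ => cases hgu

lemma isOpen_singleton_z (g : ZMod 2 × H) (i : ℕ) : IsOpen {Grpd.z g i} :=
  GenerateOpen.basic _
    ⟨g, {U0.z i}, GenerateOpen.basic _ (Or.inl (Or.inl (Or.inr ⟨i, rfl⟩))),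
      by rw [Set.image_singleton]; rfl⟩

end Grpd

variable {H : Type}

lemma support_g0 :
    {γ : Grpd H | g0 H γ ≠ 0} = {γ : Grpd H | ∃ (n : ZMod 2) (i : ℕ), γ = Grpd.y n i} := by
  ext γ
  cases γ with
  | y n i => simp only [g0, Set.mem_ofPred_eq]; split_ifs <;> simp
  | _ => simp [g0]

lemma singular_g0 : Singular (g0 H) := by
  refine Set.eq_empty_iff_forall_notMem.2 fun γ hγ => ?_
  rw [support_g0] at hγ
  obtain ⟨n, i, rfl⟩ := interior_subset hγ
  obtain ⟨j, hj⟩ := ((Grpd.tendsto_x_nhds_y n i).eventually_mem (mem_interior_iff_mem_nhds.1 hγ)).exists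
  simp at hj

/-- The witness is `∑_{g ∈ T, g.1 = n} f_g ∘ σ_g`; it vanishes at `z_i` because `U_g` is the
only `U_{g'}` containing `(g, z_i)`. -/
lemma exists_continuous_eq_on_y_of_vanish_z {f : Grpd H → ℂ} (hf : f ∈ AG H)
    (hz : ∀ g i, f (Grpd.z g i) = 0) (n : ZMod 2) :
    ∃ ψ : U0 → ℂ, Continuous ψ ∧ (∀ i, ψ (U0.y i) = f (Grpd.y n i)) ∧ ∀ i, ψ (U0.z i) = 0 := by
  obtain ⟨T, F, hvan, hcont, rfl⟩ := hf
  refine ⟨fun u => ∑ g ∈ T with g.1 = n, F g (sigmaMap g u),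
    continuous_finsetSum _ fun g _ => hcont g, fun i => ?_, fun i => ?_⟩
  · simp only [Finset.sum_filter]
    refine Finset.sum_congr rfl fun g _ => ?_
    split_ifs with hg
    · simp [sigmaMap, hg]
    · refine (hvan g _ ?_).symm
      rintro ⟨u, hu⟩
      cases u <;> simp_all [sigmaMap]
  · refine Finset.sum_eq_zero fun g hg => ?_
    have hFz : ∀ g' ≠ g, F g' (Grpd.z g i) = 0 := fun g' hg' => hvan g' _ (by
      rintro ⟨u, hu⟩
      cases u <;> simp_all [sigmaMap])
    simpa [sigmaMap, Finset.sum_eq_single_of_mem g (Finset.mem_filter.1 hg).1 fun g' _ => hFz g']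
      using hz g i

lemma tendsto_apply_y_of_vanish_z {f : Grpd H → ℂ} (hf : f ∈ AG H)
    (hz : ∀ g i, f (Grpd.z g i) = 0) (n : ZMod 2) :
    Tendsto (fun i => f (Grpd.y n i)) cofinite (𝓝 0) := by
  obtain ⟨ψ, hψ, hψy, hψz⟩ := exists_continuous_eq_on_y_of_vanish_z hf hz n
  have hψeps : ψ U0.eps = 0 :=
    tendsto_nhds_unique ((hψ.tendsto _).comp U0.tendsto_z_nhds_eps)
      (by simp only [Function.comp_def, hψz, tendsto_const_nhds])
  simpa [hψy, hψeps, Function.comp_def] using (hψ.tendsto _).comp U0.tendsto_y_nhds_eps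

lemma exists_apply_z_ne_zero {f : Grpd H → ℂ} (hf : f ∈ AG H) {c : ℝ} (hc : c < 1)
    (hfc : ∀ γ, ‖f γ - g0 H γ‖ ≤ c) : ∃ g i, f (Grpd.z g i) ≠ 0 := by
  by_contra! hz
  have hlim : Tendsto (fun i => ‖f (Grpd.y 1 i) - g0 H (Grpd.y 1 i)‖) cofinite (𝓝 1) := by
    simpa [g0] using ((tendsto_apply_y_of_vanish_z hf hz 1).add_const 1).norm
  exact hc.not_ge (le_of_tendsto' hlim fun i => hfc _)

lemma interior_support_nonempty {f : Grpd H → ℂ} (hf : f ∈ AG H) {c : ℝ} (hc : c < 1)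
    (hfc : ∀ γ, ‖f γ - g0 H γ‖ ≤ c) : (interior {γ | f γ ≠ 0}).Nonempty := by
  obtain ⟨g, i, hgi⟩ := exists_apply_z_ne_zero hf hc hfc
  exact ⟨_, (Grpd.isOpen_singleton_z g i).subset_interior_iff.2
    (Set.singleton_subset_iff.2 hgi) rfl⟩

theorem stmt2_general (H : Type) :
    ({γ : Grpd H | g0 H γ ≠ 0} = {γ : Grpd H | ∃ (n : ZMod 2) (i : ℕ), γ = Grpd.y n i}) ∧
    Singular (g0 H) ∧
    (∀ f ∈ AG H,
      (∃ c : ℝ, c < 1 / 2 ∧ ∀ γ : Grpd H, ‖f γ - g0 H γ‖ ≤ c) →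
      (interior {γ : Grpd H | f γ ≠ 0}).Nonempty ∧ ¬ Singular f) ∧
    ¬ ∃ fs : ℕ → (Grpd H → ℂ),
        (∀ n, fs n ∈ AG H ∧ Singular (fs n)) ∧
        TendstoUniformly fs (g0 H) Filter.atTop := by
  refine ⟨support_g0, singular_g0, fun f hf ⟨c, hc, hfc⟩ => ?_, ?_⟩
  · have hne := interior_support_nonempty hf (by linarith) hfc
    exact ⟨hne, hne.ne_empty⟩
  · rintro ⟨fs, hfs, hlim⟩
    obtain ⟨n, hn⟩ := (Metric.tendstoUniformly_iff.1 hlim (1 / 2) (by norm_num)).exists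
    have hfc : ∀ γ, ‖fs n γ - g0 H γ‖ ≤ 1 / 2 := fun γ => by
      rw [← dist_eq_norm, dist_comm]
      exact (hn γ).le
    exact (interior_support_nonempty (hfs n).1 (by norm_num) hfc).ne_empty (hfs n).2

/-- (i) `g₀` is singular with support `(ℤ/2) × Y`; (ii) any `f ∈ A(𝒢)` uniformly within `< 1/2`
of `g₀` has support with nonempty interior, hence is not singular; consequently `g₀` is not in
the uniform closure of the set of singular elements of `A(𝒢)`. -/
theorem stmt2 (H : Type) [Group H] :
    ({γ : Grpd H | g0 H γ ≠ 0} = {γ : Grpd H | ∃ (n : ZMod 2) (i : ℕ), γ = Grpd.y n i}) ∧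
    Singular (g0 H) ∧
    (∀ f ∈ AG H,
      (∃ c : ℝ, c < 1 / 2 ∧ ∀ γ : Grpd H, ‖f γ - g0 H γ‖ ≤ c) →
      (interior {γ : Grpd H | f γ ≠ 0}).Nonempty ∧ ¬ Singular f) ∧
    ¬ ∃ fs : ℕ → (Grpd H → ℂ),
        (∀ n, fs n ∈ AG H ∧ Singular (fs n)) ∧
        TendstoUniformly fs (g0 H) Filter.atTop :=
  stmt2_general H
end

section
/- The space 𝒢⁰ is compact and Hausdorff. The space 𝒢 is not Hausdorff: for every i ∈ ℕ, the sequence (x_{ij})_{j∈ℕ} converges in 𝒢 both to (0, y_i) and to (1, y_i), and these are distinct points of 𝒢. -/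
/-!
Every open neighbourhood of `ε` contains some `U_{F_Y,F_Z}`, whose complement is a finite union
of the sets `{y_i} ∪ X_i` (convergent sequences with their limits) and points `z_k`, hence
compact; so `𝒢⁰` is compact. The sets `{x_{ij}}`, `{z_k}` and `U_{y_i,∅}` are clopen and
separate points, so `𝒢⁰` is totally separated, hence Hausdorff. Finally, a basic open set
`σ_g(U)` containing `(n, y_i)` has `y_i ∈ U`, so it contains `σ_g(x_{ij}) = x_{ij}` for all large
`j`: the sequence `x_{ij}` converges to both `(0, y_i)` and `(1, y_i)`.
-/

open Filter Topology Set

lemma CompactSpace.of_cocompact_le_nhds {X : Type*} [TopologicalSpace X] {a : X}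
    (h : cocompact X ≤ 𝓝 a) : CompactSpace X := by
  classical
  refine ⟨isCompact_of_finite_subcover fun U hU hcover => ?_⟩
  obtain ⟨i, hi⟩ := mem_iUnion.1 (hcover (mem_univ a))
  obtain ⟨K, hK, hKU⟩ := mem_cocompact.1 (h ((hU i).mem_nhds hi))
  obtain ⟨t, ht⟩ := hK.elim_finite_subcover U hU ((subset_univ K).trans hcover)
  refine ⟨insert i t, fun x _ => ?_⟩
  rw [Finset.set_biUnion_insert]
  by_cases hx : x ∈ U i
  · exact .inl hx
  · exact .inr (ht (compl_subset_comm.1 hKU hx))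

namespace U0

@[simp] lemma x_mem_Uy {i i' j : ℕ} {F : Finset ℕ} : x i' j ∈ Uy i F ↔ i' = i ∧ j ∉ F := by
  simp [Uy, and_comm]

@[simp] lemma y_mem_Uy {i i' : ℕ} {F : Finset ℕ} : y i' ∈ Uy i F ↔ i' = i := by
  simp [Uy]

@[simp] lemma z_notMem_Uy {i k : ℕ} {F : Finset ℕ} : z k ∉ Uy i F := by
  simp [Uy]

@[simp] lemma eps_notMem_Uy {i : ℕ} {F : Finset ℕ} : eps ∉ Uy i F := by
  simp [Uy]

@[simp] lemma eps_mem_UFF {FY FZ : Finset ℕ} : eps ∈ UFF FY FZ := by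
  simp [UFF]

lemma Uy_empty (i : ℕ) : Uy i ∅ = insert (y i) (range (x i)) := by
  ext (⟨i', j⟩ | i' | k | _) <;> simp [eq_comm]

lemma isOpen_singleton_x (i j : ℕ) : IsOpen {x i j} :=
  .basic _ (.inl (.inl (.inl ⟨i, j, rfl⟩)))

lemma isOpen_singleton_z (k : ℕ) : IsOpen {z k} :=
  .basic _ (.inl (.inl (.inr ⟨k, rfl⟩)))

lemma isOpen_Uy (i : ℕ) (F : Finset ℕ) : IsOpen (Uy i F) :=
  .basic _ (.inl (.inr ⟨i, F, rfl⟩))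

lemma isOpen_UFF (FY FZ : Finset ℕ) : IsOpen (UFF FY FZ) :=
  .basic _ (.inr ⟨FY, FZ, rfl⟩)

lemma UFF_antitone : Antitone fun p : Finset ℕ × Finset ℕ => UFF p.1 p.2 := by
  rintro ⟨FY, FZ⟩ ⟨FY', FZ'⟩ ⟨hY, hZ⟩
  exact compl_subset_compl.2 (union_subset_union (biUnion_subset_biUnion_left hY)
    (image_mono (Finset.coe_subset.2 hZ)))

lemma tendsto_x_nhds_y_s3 (i : ℕ) : Tendsto (x i) atTop (𝓝 (y i)) := by
  refine TopologicalSpace.tendsto_nhds_generateFrom_iff.2 ?_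
  rintro s (((⟨i', j, rfl⟩ | ⟨k, rfl⟩) | ⟨i', F, rfl⟩) | ⟨FY, FZ, rfl⟩) hy
  · cases hy
  · cases hy
  · obtain rfl : i = i' := y_mem_Uy.1 hy
    filter_upwards [Nat.cofinite_eq_atTop ▸ F.eventually_cofinite_notMem] with j hj
    exact x_mem_Uy.2 ⟨rfl, hj⟩
  · exact univ_mem' fun j => by simpa [UFF] using hy

lemma isCompact_compl_UFF (FY FZ : Finset ℕ) : IsCompact (UFF FY FZ)ᶜ := by
  rw [UFF, compl_compl]
  refine .union (FY.isCompact_biUnion fun i _ => ?_) (FZ.finite_toSet.image z).isCompact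
  rw [Uy_empty]
  exact (tendsto_x_nhds_y_s3 i).isCompact_insert_range

lemma nhds_eps : 𝓝 eps = ⨅ p : Finset ℕ × Finset ℕ, 𝓟 (UFF p.1 p.2) := by
  refine le_antisymm
    (le_iInf fun _ => le_principal_iff.2 ((isOpen_UFF _ _).mem_nhds eps_mem_UFF)) ?_
  rw [TopologicalSpace.nhds_generateFrom]
  refine le_iInf₂ fun s ⟨he, hs⟩ => ?_
  rcases hs with ((⟨i, j, rfl⟩ | ⟨k, rfl⟩) | ⟨i, F, rfl⟩) | ⟨FY, FZ, rfl⟩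
  · cases he
  · cases he
  · exact absurd he eps_notMem_Uy
  · exact iInf_le_of_le (FY, FZ) le_rfl

lemma hasBasis_nhds_eps :
    (𝓝 eps).HasBasis (fun _ => True) fun p : Finset ℕ × Finset ℕ => UFF p.1 p.2 :=
  nhds_eps ▸ hasBasis_iInf_principal UFF_antitone.directed_ge

instance : CompactSpace U0 :=
  .of_cocompact_le_nhds (a := eps) fun s hs => by
    obtain ⟨⟨FY, FZ⟩, -, hsub⟩ := hasBasis_nhds_eps.mem_iff.1 hs
    exact mem_cocompact.2 ⟨_, isCompact_compl_UFF FY FZ, by rwa [compl_compl]⟩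

lemma isClopen_Uy_empty (i : ℕ) : IsClopen (Uy i ∅) := by
  refine ⟨isOpen_compl_iff.1 ?_, isOpen_Uy i ∅⟩
  convert isOpen_UFF {i} ∅
  simp [UFF]

lemma isClopen_singleton_x (i j : ℕ) : IsClopen {x i j} := by
  refine ⟨isOpen_compl_iff.1 ?_, isOpen_singleton_x i j⟩
  convert (isOpen_Uy i {j}).union (isOpen_UFF {i} ∅)
  ext (⟨i', j'⟩ | i' | k | _) <;> simp [UFF] <;> tauto

lemma isClopen_singleton_z (k : ℕ) : IsClopen {z k} := by
  refine ⟨isOpen_compl_iff.1 ?_, isOpen_singleton_z k⟩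
  convert isOpen_UFF ∅ {k}
  ext (⟨i, j⟩ | i | k' | _) <;> simp [UFF]

instance : TotallySeparatedSpace U0 := by
  refine totallySeparatedSpace_iff_exists_isClopen.2 fun a b hab => ?_
  have swap {a b : U0} : (∃ s, IsClopen s ∧ b ∈ s ∧ a ∈ sᶜ) → ∃ s, IsClopen s ∧ a ∈ s ∧ b ∈ sᶜ :=
    fun ⟨s, hs, hb, ha⟩ => ⟨sᶜ, hs.compl, ha, by simpa⟩
  rcases a with ⟨i, j⟩ | i | k | _
  · exact ⟨_, isClopen_singleton_x i j, rfl, Ne.symm hab⟩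
  · rcases b with ⟨i', j⟩ | i' | k | _
    · exact swap ⟨_, isClopen_singleton_x i' j, rfl, hab⟩
    all_goals exact ⟨_, isClopen_Uy_empty i, by simp, by simp_all [eq_comm]⟩
  · exact ⟨_, isClopen_singleton_z k, rfl, Ne.symm hab⟩
  · rcases b with ⟨i, j⟩ | i | k | _
    · exact swap ⟨_, isClopen_singleton_x i j, rfl, hab⟩
    · exact swap ⟨_, isClopen_Uy_empty i, by simp, by simp⟩
    · exact swap ⟨_, isClopen_singleton_z k, rfl, hab⟩
    · exact absurd rfl hab

end U0

namespace Grpd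

variable {H : Type}

lemma tendsto_x_nhds_y_s3 (n : ZMod 2) (i : ℕ) :
    Tendsto (fun j => (x i j : Grpd H)) atTop (𝓝 (y n i)) := by
  refine TopologicalSpace.tendsto_nhds_generateFrom_iff.2 ?_
  rintro _ ⟨g, U, hU, rfl⟩ ⟨u, hu, hgu⟩
  obtain rfl : u = U0.y i := by cases u <;> simp_all [sigmaMap]
  filter_upwards [U0.tendsto_x_nhds_y_s3 i (hU.mem_nhds hu)] with j hj
  exact ⟨U0.x i j, hj, rfl⟩

lemma y_zero_ne_y_one (i : ℕ) : (y 0 i : Grpd H) ≠ y 1 i := by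
  simp

variable (H) in
lemma not_t2Space : ¬ T2Space (Grpd H) := fun _ =>
  y_zero_ne_y_one (H := H) 0 (tendsto_nhds_unique (tendsto_x_nhds_y_s3 0 0) (tendsto_x_nhds_y_s3 1 0))

end Grpd

theorem stmt3_general (H : Type) :
    CompactSpace U0 ∧ T2Space U0 ∧
    ¬ T2Space (Grpd H) ∧
    (∀ i : ℕ,
      Filter.Tendsto (fun j : ℕ => (Grpd.x i j : Grpd H)) Filter.atTop
        (nhds (Grpd.y (0 : ZMod 2) i)) ∧
      Filter.Tendsto (fun j : ℕ => (Grpd.x i j : Grpd H)) Filter.atTop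
        (nhds (Grpd.y (1 : ZMod 2) i)) ∧
      (Grpd.y (0 : ZMod 2) i : Grpd H) ≠ Grpd.y (1 : ZMod 2) i) :=
  ⟨inferInstance, inferInstance, Grpd.not_t2Space H, fun i =>
    ⟨Grpd.tendsto_x_nhds_y_s3 0 i, Grpd.tendsto_x_nhds_y_s3 1 i, Grpd.y_zero_ne_y_one i⟩⟩

/-- `𝒢⁰` is compact Hausdorff; `𝒢` is not Hausdorff: for each `i`, the sequence `(x_{ij})_j`
converges in `𝒢` both to `(0,y_i)` and to `(1,y_i)`, which are distinct. -/
theorem stmt3 (H : Type) [Group H] :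
    CompactSpace U0 ∧ T2Space U0 ∧
    ¬ T2Space (Grpd H) ∧
    (∀ i : ℕ,
      Filter.Tendsto (fun j : ℕ => (Grpd.x i j : Grpd H)) Filter.atTop
        (nhds (Grpd.y (0 : ZMod 2) i)) ∧
      Filter.Tendsto (fun j : ℕ => (Grpd.x i j : Grpd H)) Filter.atTop
        (nhds (Grpd.y (1 : ZMod 2) i)) ∧
      (Grpd.y (0 : ZMod 2) i : Grpd H) ≠ Grpd.y (1 : ZMod 2) i) :=
  stmt3_general H
end

section
/- For any two distinct elements h₁, h₂ ∈ H, the intersection U_{(0,h₁)} ∩ U_{(0,h₂)} equals B := X ⊔ ({0} × Y). Consequently, for any sequence (H_n) of nonempty finite subsets of H, the functions b_n := (1/|H_n|) Σ_{h∈H_n} χ_{U_{(0,h)}} : 𝒢 → ℂ satisfy sup_{γ∈𝒢} |b_n(γ) − χ_B(γ)| ≤ 1/|H_n|; in particular, if |H_n| → ∞ then b_n converges uniformly on 𝒢 to the indicator function χ_B. -/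
/-- The set `B = X ⊔ ({0} × Y) ⊆ 𝒢`. -/
def BSet (H : Type) : Set (Grpd H) :=
  {γ : Grpd H | (∃ i j, γ = Grpd.x i j) ∨ (∃ i, γ = Grpd.y (0 : ZMod 2) i)}

/-! Every `U_{(0,h)}` contains `B`, while off `B` a point lies in at most one `U_{(0,h)}`, since
over `Z` and `ε` the point records its group element. Hence `b_n - χ_B` vanishes on `B` and takes
only the values `0` and `1/|H_n|` off `B`. -/

open Filter Topology Finset

theorem norm_average_indicator_sub_indicator_le {ι α 𝕜 : Type*} [RCLike 𝕜]
    {A : ι → Set α} {B : Set α} (hBA : ∀ i, B ⊆ A i)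
    (hA : Pairwise fun i j => A i ∩ A j ⊆ B) {s : Finset ι} (hs : s.Nonempty) (x : α) :
    ‖(1 / (#s : 𝕜)) * ∑ i ∈ s, (A i).indicator (fun _ => (1 : 𝕜)) x -
        B.indicator (fun _ => (1 : 𝕜)) x‖ ≤ 1 / (#s : ℝ) := by
  classical
  have hsum : ∑ i ∈ s, (A i).indicator (fun _ => (1 : 𝕜)) x = #{i ∈ s | x ∈ A i} := by
    simp only [Set.indicator_apply, sum_boole]
  by_cases hx : x ∈ B
  · have hall : {i ∈ s | x ∈ A i} = s := filter_true_of_mem fun i _ => hBA i hx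
    have hcard : (#s : 𝕜) ≠ 0 := by exact_mod_cast hs.card_pos.ne'
    rw [hsum, hall, Set.indicator_of_mem hx, one_div, inv_mul_cancel₀ hcard, sub_self,
      norm_zero]
    positivity
  · have hle : #{i ∈ s | x ∈ A i} ≤ 1 := card_le_one.2 fun i hi j hj =>
      by_contra fun hij => hx (hA hij ⟨(mem_filter.1 hi).2, (mem_filter.1 hj).2⟩)
    rw [hsum, Set.indicator_of_notMem hx, sub_zero, norm_mul, norm_div, norm_one,
      RCLike.norm_natCast, RCLike.norm_natCast]
    calc 1 / (#s : ℝ) * #{i ∈ s | x ∈ A i} ≤ 1 / #s * 1 := by gcongr; exact_mod_cast hle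
      _ = 1 / #s := mul_one _

theorem tendstoUniformly_of_norm_sub_le {ι α β : Type*} [SeminormedAddCommGroup β]
    {l : Filter ι} {F : ι → α → β} {f : α → β} {c : ι → ℝ} (hF : ∀ n x, ‖F n x - f x‖ ≤ c n)
    (hc : Tendsto c l (𝓝 0)) : TendstoUniformly F f l := by
  rw [Metric.tendstoUniformly_iff]
  intro ε hε
  filter_upwards [hc.eventually (gt_mem_nhds hε)] with n hn x
  rw [dist_eq_norm_sub']
  exact (hF n x).trans_lt hn

section Bisections

variable {H : Type}

theorem BSet_subset_Ug (h : H) : BSet H ⊆ Ug ((0 : ZMod 2), h) := by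
  rintro γ (⟨i, j, rfl⟩ | ⟨i, rfl⟩)
  exacts [⟨U0.x i j, rfl⟩, ⟨U0.y i, rfl⟩]

theorem Ug_inter_Ug_subset_BSet {h₁ h₂ : H} (hne : h₁ ≠ h₂) :
    Ug ((0 : ZMod 2), h₁) ∩ Ug ((0 : ZMod 2), h₂) ⊆ BSet H := by
  rintro γ ⟨⟨u, rfl⟩, ⟨v, hv⟩⟩
  cases u <;> cases v <;> simp_all [sigmaMap, BSet]

theorem Ug_inter_Ug_eq_BSet {h₁ h₂ : H} (hne : h₁ ≠ h₂) :
    Ug ((0 : ZMod 2), h₁) ∩ Ug ((0 : ZMod 2), h₂) = BSet H :=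
  (Ug_inter_Ug_subset_BSet hne).antisymm
    fun _ hγ => ⟨BSet_subset_Ug h₁ hγ, BSet_subset_Ug h₂ hγ⟩

end Bisections

theorem stmt4_general (H : Type) :
    (∀ h₁ h₂ : H, h₁ ≠ h₂ →
      Ug (((0 : ZMod 2), h₁)) ∩ Ug (((0 : ZMod 2), h₂)) = BSet H) ∧
    (∀ Hn : ℕ → Finset H, (∀ n, (Hn n).Nonempty) →
      (∀ (n : ℕ) (γ : Grpd H),
        ‖(1 / ((Hn n).card : ℂ)) *
            ∑ h ∈ Hn n, Set.indicator (Ug (((0 : ZMod 2), h))) (fun _ => (1 : ℂ)) γ -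
          Set.indicator (BSet H) (fun _ => (1 : ℂ)) γ‖ ≤ 1 / ((Hn n).card : ℝ)) ∧
      (Filter.Tendsto (fun n => (Hn n).card) Filter.atTop Filter.atTop →
        TendstoUniformly
          (fun (n : ℕ) (γ : Grpd H) => (1 / ((Hn n).card : ℂ)) *
            ∑ h ∈ Hn n, Set.indicator (Ug (((0 : ZMod 2), h))) (fun _ => (1 : ℂ)) γ)
          (Set.indicator (BSet H) (fun _ => (1 : ℂ))) Filter.atTop)) := by
  have hbound (Hn : ℕ → Finset H) (hne : ∀ n, (Hn n).Nonempty) (n : ℕ) (γ : Grpd H) :=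
    norm_average_indicator_sub_indicator_le (𝕜 := ℂ) BSet_subset_Ug
      (fun _ _ => Ug_inter_Ug_subset_BSet) (hne n) γ
  refine ⟨fun _ _ => Ug_inter_Ug_eq_BSet, fun Hn hne => ⟨hbound Hn hne, fun hcard => ?_⟩⟩
  exact tendstoUniformly_of_norm_sub_le (hbound Hn hne)
    (tendsto_one_div_atTop_nhds_zero_nat.comp hcard)

/-- For distinct `h₁, h₂ ∈ H` one has `U_{(0,h₁)} ∩ U_{(0,h₂)} = B = X ⊔ ({0} × Y)`;
consequently for any sequence `(H_n)` of nonempty finite subsets of `H`, the averaged indicators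
`b_n = (1/|H_n|) ∑_{h ∈ H_n} χ_{U_{(0,h)}}` satisfy `|b_n(γ) − χ_B(γ)| ≤ 1/|H_n|` for all `γ`,
and converge uniformly to `χ_B` whenever `|H_n| → ∞`. -/
theorem stmt4 (H : Type) [Group H] :
    (∀ h₁ h₂ : H, h₁ ≠ h₂ →
      Ug (((0 : ZMod 2), h₁)) ∩ Ug (((0 : ZMod 2), h₂)) = BSet H) ∧
    (∀ Hn : ℕ → Finset H, (∀ n, (Hn n).Nonempty) →
      (∀ (n : ℕ) (γ : Grpd H),
        ‖(1 / ((Hn n).card : ℂ)) *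
            ∑ h ∈ Hn n, Set.indicator (Ug (((0 : ZMod 2), h))) (fun _ => (1 : ℂ)) γ -
          Set.indicator (BSet H) (fun _ => (1 : ℂ)) γ‖ ≤ 1 / ((Hn n).card : ℝ)) ∧
      (Filter.Tendsto (fun n => (Hn n).card) Filter.atTop Filter.atTop →
        TendstoUniformly
          (fun (n : ℕ) (γ : Grpd H) => (1 / ((Hn n).card : ℂ)) *
            ∑ h ∈ Hn n, Set.indicator (Ug (((0 : ZMod 2), h))) (fun _ => (1 : ℂ)) γ)
          (Set.indicator (BSet H) (fun _ => (1 : ℂ))) Filter.atTop)) :=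
  stmt4_general H
end

section
/- The recursively defined maps give a faithful, length-preserving action of G on the set of finite words over X. Precisely: (i) 1_G·w = w and ρ*(1_G, w) = 1_G for every word w; (ii) for all g, g' ∈ G and every letter x ∈ X, α(gg', x) = α(g, α(g', x)) and ρ(gg', x) = ρ(g, α(g', x))·ρ(g', x), and consequently for every word w, (gg')·w = g·(g'·w) and ρ*(gg', w) = ρ*(g, g'·w)·ρ*(g', w); (iii) for every g ∈ G and word w, the word g·w has the same length as w; (iv) the action is faithful already on Z: if g ∈ G satisfies α(g, z) = z for every z ∈ Z, then g = 1_G. -/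
/-- The group `G = H × F(a,b) × ℤ × ℤ` (with `ℤ` written multiplicatively so that the product
carries a group structure). The free group on two generators is `FreeGroup Bool`, with
generators `a = .of false` and `b = .of true`. -/
abbrev GG (H : Type) : Type := H × FreeGroup Bool × Multiplicative ℤ × Multiplicative ℤ

/-- The group `K = H × F(a,b) × ℤ`. -/
abbrev KK (H : Type) : Type := H × FreeGroup Bool × Multiplicative ℤ

/-- `π₁ : G → K`, `(h,f,n,m) ↦ (h,f,n)`. -/
def pi1 {H : Type} (g : GG H) : KK H := (g.1, g.2.1, g.2.2.1)

/-- `π₂ : G → K`, `(h,f,n,m) ↦ (h,f,m)`. -/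
def pi2 {H : Type} (g : GG H) : KK H := (g.1, g.2.1, g.2.2.2)

/-- `ζ₁ : G → ℤ`, `(h,f,n,m) ↦ n`. -/
def zeta1 {H : Type} (g : GG H) : ℤ := Multiplicative.toAdd g.2.2.1

/-- `ζ₂ : G → ℤ`, `(h,f,n,m) ↦ m`. -/
def zeta2 {H : Type} (g : GG H) : ℤ := Multiplicative.toAdd g.2.2.2

/-- The exponent sum of the generator `i` in an element of the free group on two generators. -/
def expSum (i : Bool) : FreeGroup Bool →* Multiplicative ℤ :=
  FreeGroup.lift (fun j => Multiplicative.ofAdd (if j = i then (1 : ℤ) else 0))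

/-- `τ : G → G`, `(h,f,n,m) ↦ (1,1,|f|_a,|f|_b)`, the abelianization of `F` in `G`. -/
def tau {H : Type} [Group H] (g : GG H) : GG H :=
  (1, 1, expSum false g.2.1, expSum true g.2.1)

/-- The alphabet `X = Y ⊔ Z`, `Y = {yⁱ_n : n ∈ ℤ}`, `Z = {zⁱ_k : k ∈ K}`, `i ∈ {1,2}`
(`i = 1` encoded as `false`, `i = 2` as `true`). -/
inductive Letter (H : Type) : Type
  | y : Bool → ℤ → Letter H
  | z : Bool → KK H → Letter H

/-- The letter action `α : G × X → X`:
`α(g, yⁱ_n) = yⁱ_{ζᵢ(g)+n}` and `α(g, zⁱ_k) = zⁱ_{πᵢ(g)·k}`. -/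
def actL {H : Type} [Group H] (g : GG H) : Letter H → Letter H
  | Letter.y false n => Letter.y false (zeta1 g + n)
  | Letter.y true n => Letter.y true (zeta2 g + n)
  | Letter.z false k => Letter.z false (pi1 g * k)
  | Letter.z true k => Letter.z true (pi2 g * k)

/-- The restriction `ρ : G × X → G`: `ρ(g, yⁱ_n) = τ(g)` and `ρ(g, zⁱ_k) = 1`. -/
def resL {H : Type} [Group H] (g : GG H) : Letter H → GG H
  | Letter.y _ _ => tau g
  | Letter.z _ _ => 1

/-- The action of `G` on finite words over `X`:
`g·ε = ε` and `g·(x w) = α(g,x) (ρ(g,x)·w)`. -/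
def wact {H : Type} [Group H] : GG H → List (Letter H) → List (Letter H)
  | _, [] => []
  | g, x :: w => actL g x :: wact (resL g x) w

/-- The restriction of `g ∈ G` along a word: `ρ*(g,ε) = g`, `ρ*(g, x w) = ρ*(ρ(g,x), w)`. -/
def wres {H : Type} [Group H] : GG H → List (Letter H) → GG H
  | g, [] => g
  | g, x :: w => wres (resL g x) w

lemma tau_one {H : Type} [Group H] : tau (1 : GG H) = 1 := by
  simp [tau, expSum]

lemma tau_mul {H : Type} [Group H] (g g' : GG H) : tau (g * g') = tau g * tau g' := by
  simp [tau]

lemma actL_one {H : Type} [Group H] (x : Letter H) : actL (1 : GG H) x = x := by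
  cases x with
  | y i n => cases i <;> simp [actL, zeta1, zeta2]
  | z i k => cases i <;> simp [actL, pi1, pi2]

lemma resL_one {H : Type} [Group H] (x : Letter H) : resL (1 : GG H) x = 1 := by
  cases x with
  | y i n => simp [resL, tau_one]
  | z i k => simp [resL]

lemma actL_mul {H : Type} [Group H] (g g' : GG H) (x : Letter H) :
    actL (g * g') x = actL g (actL g' x) := by
  cases x with
  | y i n => cases i <;> simp [actL, zeta1, zeta2, add_assoc]
  | z i k => cases i <;> simp [actL, pi1, pi2, Prod.mul_def, mul_assoc]

lemma resL_mul {H : Type} [Group H] (g g' : GG H) (x : Letter H) :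
    resL (g * g') x = resL g (actL g' x) * resL g' x := by
  cases x with
  | y i n => cases i <;> simp [actL, resL, tau_mul]
  | z i k => cases i <;> simp [actL, resL]

lemma wact_one {H : Type} [Group H] (w : List (Letter H)) : wact (1 : GG H) w = w := by
  induction w with
  | nil => rfl
  | cons x w ih => simp [wact, actL_one, resL_one, ih]

lemma wres_one {H : Type} [Group H] (w : List (Letter H)) : wres (1 : GG H) w = 1 := by
  induction w with
  | nil => rfl
  | cons x w ih => simp [wres, resL_one, ih]

lemma wact_mul {H : Type} [Group H] (g g' : GG H) (w : List (Letter H)) :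
    wact (g * g') w = wact g (wact g' w) := by
  induction w generalizing g g' with
  | nil => rfl
  | cons x w ih => simp [wact, actL_mul, resL_mul, ih]

lemma wres_mul {H : Type} [Group H] (g g' : GG H) (w : List (Letter H)) :
    wres (g * g') w = wres g (wact g' w) * wres g' w := by
  induction w generalizing g g' with
  | nil => rfl
  | cons x w ih => simp [wres, wact, resL_mul, ih]

/-- The recursively defined maps give a faithful, length-preserving action of `G` on words:
(i) the identity acts trivially with trivial restrictions; (ii) the cocycle identities for
products, on letters and on words; (iii) the action is length-preserving; (iv) faithfulness
already on `Z`. -/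
theorem stmt6 (H : Type) [Group H] :
    (∀ w : List (Letter H), wact (1 : GG H) w = w ∧ wres (1 : GG H) w = 1) ∧
    (∀ (g g' : GG H) (x : Letter H),
      actL (g * g') x = actL g (actL g' x) ∧
      resL (g * g') x = resL g (actL g' x) * resL g' x) ∧
    (∀ (g g' : GG H) (w : List (Letter H)),
      wact (g * g') w = wact g (wact g' w) ∧
      wres (g * g') w = wres g (wact g' w) * wres g' w) ∧
    (∀ (g : GG H) (w : List (Letter H)), (wact g w).length = w.length) ∧
    (∀ g : GG H, (∀ (i : Bool) (k : KK H), actL g (Letter.z i k) = Letter.z i k) → g = 1) := by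
  refine ⟨fun w => ⟨wact_one w, wres_one w⟩,
    fun g g' x => ⟨actL_mul g g' x, resL_mul g g' x⟩,
    fun g g' w => ⟨wact_mul g g' w, wres_mul g g' w⟩,
    ?_, ?_⟩
  · intro g w
    induction w generalizing g with
    | nil => rfl
    | cons x w ih => simp [wact, ih]
  · intro g hg
    have h1 := hg false 1
    have h2 := hg true 1
    simp [actL] at h1 h2
    obtain ⟨g1, g2, g3, g4⟩ := g
    simp [pi1, Prod.ext_iff] at h1
    simp [pi2, Prod.ext_iff] at h2
    obtain ⟨e1, e2, e3⟩ := h1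
    exact Prod.ext e1 (Prod.ext e2 (Prod.ext e3 h2.2.2))
end

section
/- For every g ∈ G with g ≠ 1_G, there exists i ∈ {1,2} such that α(g, zⁱ_k) ≠ zⁱ_k for every k ∈ K. Consequently, the only element g ∈ G that strongly fixes all but finitely many letters — i.e., such that α(g, x) = x and ρ(g, x) = 1_G for all but finitely many x ∈ X — is g = 1_G. -/
/-- For every `g ≠ 1` in `G` there is `i ∈ {1,2}` such that `g` moves every letter `zⁱ_k`;
consequently the only element of `G` strongly fixing all but finitely many letters is the
identity. -/
theorem stmt7 (H : Type) [Group H] :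
    (∀ g : GG H, g ≠ 1 →
      ∃ i : Bool, ∀ k : KK H, actL g (Letter.z i k) ≠ Letter.z i k) ∧
    (∀ g : GG H,
      {x : Letter H | ¬ (actL g x = x ∧ resL g x = 1)}.Finite → g = 1) :=
  by
  have key : ∀ g : GG H, g ≠ 1 →
      ∃ i : Bool, ∀ k : KK H, actL g (Letter.z i k) ≠ Letter.z i k := by
    rintro ⟨h, f, n, m⟩ hg
    by_cases h1 : ((h, f, n) : KK H) = 1
    · refine ⟨true, fun k hk => ?_⟩
      simp only [actL, Letter.z.injEq] at hk
      have h2 : pi2 ((h, f, n, m) : GG H) = 1 :=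
        mul_right_cancel (b := k) (by simpa [pi2] using hk.2)
      apply hg
      simp only [pi2, Prod.ext_iff, Prod.mk.injEq, Prod.fst_one, Prod.snd_one] at h2 h1 ⊢
      exact ⟨h1.1, h1.2.1, h1.2.2, h2.2.2⟩
    · refine ⟨false, fun k hk => ?_⟩
      simp only [actL, Letter.z.injEq] at hk
      apply h1
      have h2 : pi1 ((h, f, n, m) : GG H) = 1 :=
        mul_right_cancel (b := k) (by simpa [pi1] using hk.2)
      simpa [pi1] using h2
  refine ⟨key, fun g hfin => ?_⟩
  by_contra hg
  obtain ⟨i, hi⟩ := key g hg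
  have hsub : Set.range (fun k : KK H => (Letter.z i k : Letter H)) ⊆
      {x | ¬ (actL g x = x ∧ resL g x = 1)} := by
    rintro x ⟨k, rfl⟩
    exact fun hx => hi k hx.1
  have hinf : (Set.range (fun k : KK H => (Letter.z i k : Letter H))).Infinite :=
    Set.infinite_range_of_injective (fun a b hab => by simpa using hab)
  exact hinf (hfin.subset hsub)
end
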